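/- arXiv:2408.01755 — 3 statements merged into one kernel-verified Lean document; each statement's English description precedes it below -/
import Mathlib

section
/- Let 0 < q < 1, let μ₃ > μ₂ > μ₁ > 0 be reals and s > j > i ≥ 1 be positive integers. Then the 3×3 determinant with (r,c) entry (q^{μ_c}; q)_{n_r}, where (n₁,n₂,n₃) = (i,j,s), is strictly positive. That is, the kernel K(μ,n) = (q^μ;q)ₙ is strictly totally positive of order 3 on (0,∞) × ℕ₀. -/
/-!
Put `y_c = q ^ μ_c`, so that `y₃ < y₂ < y₁ < 1`. Factoring `(y_c; q)_i` out of column `c` leaves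
`!![1, 1, 1; g y₁, g y₂, g y₃; G y₁, G y₂, G y₃]` with `g = ∏_{i ≤ k < j} (1 - y q^k)` and
`G = ∏_{i ≤ k < s} (1 - y q^k) = g h`, `h = ∏_{j ≤ k < s} (1 - y q^k)`; its determinant is positive
exactly when the chord slopes of `y ↦ (g y, G y)` increase along `g`. By Cauchy's mean value theorem
this follows from `G' / g' = h (1 + v / u)` being strictly decreasing on `(-∞, 1)`, where `u` and
`v` are the sums of `t_k = q^k / (1 - y q^k)` over `[i, j)` and `[j, s)`. Here `h` is positive and
strictly decreasing, and `v / u` is decreasing because `t_k' = t_k ^ 2` and `t_l ≤ t_k` for `k ≤ l`,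
so that `u ∑_{[j, s)} t_l ^ 2 ≤ v ∑_{[i, j)} t_k ^ 2`.
-/

/-- The q-Pochhammer symbol `(a; q)_n = ∏_{k=0}^{n-1} (1 - a q^k)`. -/
def qPoch (a q : ℝ) (n : ℕ) : ℝ := ∏ k ∈ Finset.range n, (1 - a * q ^ k)

open Finset Set

theorem Matrix.det_fin_three_mul_col (p₁ p₂ p₃ g₁ g₂ g₃ G₁ G₂ G₃ : ℝ) :
    Matrix.det !![p₁, p₂, p₃; p₁ * g₁, p₂ * g₂, p₃ * g₃; p₁ * G₁, p₂ * G₂, p₃ * G₃] =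
      p₁ * p₂ * p₃ * ((g₂ - g₁) * (G₃ - G₂) - (g₃ - g₂) * (G₂ - G₁)) := by
  simp only [Matrix.det_fin_three, Matrix.of_apply, Matrix.cons_val', Matrix.cons_val_zero,
    Matrix.cons_val_one, Matrix.cons_val_two, Matrix.empty_val', Matrix.cons_val_fin_one,
    Matrix.head_cons, Matrix.tail_cons, Matrix.head_fin_const]
  ring

theorem exists_mem_Ioo_sub_eq_mul_sub {f g g' R : ℝ → ℝ} {a b : ℝ} (hab : a < b)
    (hf : ∀ x ∈ Icc a b, HasDerivAt f (R x * g' x) x)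
    (hg : ∀ x ∈ Icc a b, HasDerivAt g (g' x) x) (hg' : ∀ x ∈ Icc a b, g' x ≠ 0) :
    ∃ ξ ∈ Ioo a b, f b - f a = R ξ * (g b - g a) := by
  obtain ⟨ξ, hξ, h⟩ := exists_ratio_hasDerivAt_eq_ratio_slope f (fun x => R x * g' x) hab
    (fun x hx => (hf x hx).continuousAt.continuousWithinAt)
    (fun x hx => hf x (Ioo_subset_Icc_self hx)) g g'
    (fun x hx => (hg x hx).continuousAt.continuousWithinAt)
    (fun x hx => hg x (Ioo_subset_Icc_self hx))
  refine ⟨ξ, hξ, mul_right_cancel₀ (hg' ξ (Ioo_subset_Icc_self hξ)) ?_⟩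
  linear_combination -h

/-- The conclusion says that `f` is a strictly convex function of `g`. -/
theorem sub_mul_sub_lt_of_hasDerivAt {f g g' R : ℝ → ℝ} {a b c : ℝ} (hab : a < b) (hbc : b < c)
    (hf : ∀ x ∈ Icc a c, HasDerivAt f (R x * g' x) x)
    (hg : ∀ x ∈ Icc a c, HasDerivAt g (g' x) x) (hg' : ∀ x ∈ Icc a c, g' x < 0)
    (hR : StrictAntiOn R (Icc a c)) :
    (g a - g b) * (f b - f c) < (g b - g c) * (f a - f b) := by
  have hab' : Icc a b ⊆ Icc a c := Icc_subset_Icc_right hbc.le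
  have hbc' : Icc b c ⊆ Icc a c := Icc_subset_Icc_left hab.le
  obtain ⟨ξ, hξ, hξeq⟩ := exists_mem_Ioo_sub_eq_mul_sub hab (fun x hx => hf x (hab' hx))
    (fun x hx => hg x (hab' hx)) (fun x hx => (hg' x (hab' hx)).ne)
  obtain ⟨η, hη, hηeq⟩ := exists_mem_Ioo_sub_eq_mul_sub hbc (fun x hx => hf x (hbc' hx))
    (fun x hx => hg x (hbc' hx)) (fun x hx => (hg' x (hbc' hx)).ne)
  have hg_anti : StrictAntiOn g (Icc a c) := by
    refine strictAntiOn_of_deriv_neg (convex_Icc a c)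
      (fun x hx => (hg x hx).continuousAt.continuousWithinAt) fun x hx => ?_
    rw [(hg x (interior_subset hx)).deriv]
    exact hg' x (interior_subset hx)
  have hgab : 0 < g a - g b :=
    sub_pos.2 (hg_anti (left_mem_Icc.2 (hab.trans hbc).le) ⟨hab.le, hbc.le⟩ hab)
  have hgbc : 0 < g b - g c :=
    sub_pos.2 (hg_anti ⟨hab.le, hbc.le⟩ (right_mem_Icc.2 (hab.trans hbc).le) hbc)
  have hRηξ : R η < R ξ :=
    hR (Ioo_subset_Icc_self (Ioo_subset_Ioo_right hbc.le hξ))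
      (Ioo_subset_Icc_self (Ioo_subset_Ioo_left hab.le hη)) (hξ.2.trans hη.1)
  calc (g a - g b) * (f b - f c) = (g a - g b) * (g b - g c) * R η := by
        rw [← neg_sub (f c), hηeq]; ring
    _ < (g a - g b) * (g b - g c) * R ξ := by gcongr
    _ = (g b - g c) * (f a - f b) := by rw [← neg_sub (f b), hξeq]; ring

theorem Finset.sum_mul_sum_sq_le_of_le {ι : Type*} (S L : Finset ι) (f : ι → ℝ)
    (hf : ∀ l ∈ L, 0 ≤ f l) (hle : ∀ k ∈ S, ∀ l ∈ L, f l ≤ f k) :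
    (∑ k ∈ S, f k) * ∑ l ∈ L, f l ^ 2 ≤ (∑ l ∈ L, f l) * ∑ k ∈ S, f k ^ 2 := by
  rw [sum_mul_sum, sum_mul_sum, sum_comm]
  refine sum_le_sum fun l hl => sum_le_sum fun k hk => ?_
  have h := hle k hk l hl
  have hl := hf l hl
  nlinarith [mul_nonneg (mul_nonneg (hl.trans h) hl) (sub_nonneg.2 h)]

def qProd (q : ℝ) (A : Finset ℕ) (y : ℝ) : ℝ := ∏ k ∈ A, (1 - y * q ^ k)

noncomputable def qTerm (q : ℝ) (k : ℕ) (y : ℝ) : ℝ := q ^ k / (1 - y * q ^ k)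

variable {q y : ℝ}

theorem one_sub_mul_pow_pos (hq0 : 0 ≤ q) (hq1 : q ≤ 1) (hy : y < 1) (k : ℕ) :
    0 < 1 - y * q ^ k := by
  have h0 : 0 ≤ q ^ k := pow_nonneg hq0 k
  have h1 : q ^ k ≤ 1 := pow_le_one₀ hq0 hq1
  rcases le_or_gt y 0 with hy0 | hy0
  · nlinarith
  · nlinarith

theorem qProd_pos (hq0 : 0 ≤ q) (hq1 : q ≤ 1) (hy : y < 1) (A : Finset ℕ) : 0 < qProd q A y :=
  prod_pos fun k _ => one_sub_mul_pow_pos hq0 hq1 hy k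

theorem qPoch_pos (hq0 : 0 ≤ q) (hq1 : q ≤ 1) (hy : y < 1) (n : ℕ) : 0 < qPoch y q n :=
  qProd_pos hq0 hq1 hy (range n)

theorem qPoch_eq_mul_qProd (y : ℝ) {m n : ℕ} (hmn : m ≤ n) :
    qPoch y q n = qPoch y q m * qProd q (Ico m n) y := by
  simp only [qPoch, qProd, ← Nat.Ico_zero_eq_range]
  exact (prod_Ico_consecutive _ (Nat.zero_le m) hmn).symm

theorem qProd_Ico_mul_qProd_Ico {i j s : ℕ} (hij : i ≤ j) (hjs : j ≤ s) :
    qProd q (Ico i j) y * qProd q (Ico j s) y = qProd q (Ico i s) y :=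
  prod_Ico_consecutive _ hij hjs

theorem qProd_strictAntiOn (hq0 : 0 < q) (hq1 : q ≤ 1) {A : Finset ℕ} (hA : A.Nonempty) :
    StrictAntiOn (qProd q A) (Iio 1) := fun x _ z hz hxz =>
  prod_lt_prod_of_nonempty (fun k _ => one_sub_mul_pow_pos hq0.le hq1 hz k)
    (fun k _ => by nlinarith [mul_lt_mul_of_pos_right hxz (pow_pos hq0 k)]) hA

theorem qTerm_pos (hq0 : 0 < q) (hq1 : q ≤ 1) (hy : y < 1) (k : ℕ) : 0 < qTerm q k y :=
  div_pos (pow_pos hq0 k) (one_sub_mul_pow_pos hq0.le hq1 hy k)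

theorem qTerm_le_qTerm_of_le (hq0 : 0 ≤ q) (hq1 : q ≤ 1) (hy : y < 1) {k l : ℕ} (hkl : k ≤ l) :
    qTerm q l y ≤ qTerm q k y := by
  have hl := one_sub_mul_pow_pos hq0 hq1 hy l
  have hk := one_sub_mul_pow_pos hq0 hq1 hy k
  rw [qTerm, qTerm, div_le_div_iff₀ hl hk]
  nlinarith [pow_le_pow_of_le_one hq0 hq1 hkl]

theorem hasDerivAt_one_sub_mul_pow (q : ℝ) (k : ℕ) :
    HasDerivAt (fun z => 1 - z * q ^ k) (-q ^ k) y := by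
  simpa using ((hasDerivAt_id y).mul_const (q ^ k)).const_sub 1

theorem hasDerivAt_qTerm (k : ℕ) (hy : 1 - y * q ^ k ≠ 0) :
    HasDerivAt (qTerm q k) (qTerm q k y ^ 2) y := by
  refine ((hasDerivAt_const y (q ^ k)).div (hasDerivAt_one_sub_mul_pow q k) hy).congr_deriv ?_
  simp only [qTerm]
  field_simp
  ring

theorem qProd_insert {a : ℕ} {A : Finset ℕ} (ha : a ∉ A) (y : ℝ) :
    qProd q (insert a A) y = (1 - y * q ^ a) * qProd q A y :=
  prod_insert ha

theorem hasDerivAt_qProd (A : Finset ℕ) (hy : ∀ k ∈ A, 1 - y * q ^ k ≠ 0) :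
    HasDerivAt (qProd q A) (-(qProd q A y * ∑ k ∈ A, qTerm q k y)) y := by
  classical
  induction A using Finset.induction_on with
  | empty =>
    rw [show qProd q ∅ = fun _ => 1 from funext fun _ => prod_empty]
    simpa using hasDerivAt_const y (1 : ℝ)
  | insert a A ha ih =>
    have ha0 := hy a (mem_insert_self a A)
    have h := (hasDerivAt_one_sub_mul_pow q a).fun_mul (ih fun k hk => hy k (mem_insert_of_mem hk))
    rw [← funext (qProd_insert ha)] at h
    refine h.congr_deriv ?_
    have hta : (1 - y * q ^ a) * qTerm q a y = q ^ a := mul_div_cancel₀ _ ha0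
    rw [sum_insert ha, qProd_insert ha]
    linear_combination qProd q A y * hta

theorem hasDerivAt_sum_qTerm (A : Finset ℕ) (hy : ∀ k ∈ A, 1 - y * q ^ k ≠ 0) :
    HasDerivAt (fun z => ∑ k ∈ A, qTerm q k z) (∑ k ∈ A, qTerm q k y ^ 2) y :=
  HasDerivAt.fun_sum fun k hk => hasDerivAt_qTerm k (hy k hk)

theorem antitoneOn_sum_qTerm_div_sum_qTerm (hq0 : 0 < q) (hq1 : q ≤ 1) {S L : Finset ℕ}
    (hS : S.Nonempty) (hSL : ∀ k ∈ S, ∀ l ∈ L, k ≤ l) :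
    AntitoneOn (fun y => (∑ l ∈ L, qTerm q l y) / ∑ k ∈ S, qTerm q k y) (Iio 1) := by
  have hderiv : ∀ y < 1, HasDerivAt (fun y => (∑ l ∈ L, qTerm q l y) / ∑ k ∈ S, qTerm q k y)
      (((∑ l ∈ L, qTerm q l y ^ 2) * (∑ k ∈ S, qTerm q k y) -
        (∑ l ∈ L, qTerm q l y) * ∑ k ∈ S, qTerm q k y ^ 2) / (∑ k ∈ S, qTerm q k y) ^ 2) y := by
    intro y hy
    have hne : ∀ (A : Finset ℕ), ∀ k ∈ A, 1 - y * q ^ k ≠ 0 := fun _ k _ =>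
      (one_sub_mul_pow_pos hq0.le hq1 hy k).ne'
    exact (hasDerivAt_sum_qTerm L (hne L)).div (hasDerivAt_sum_qTerm S (hne S))
      (sum_pos (fun k _ => qTerm_pos hq0 hq1 hy k) hS).ne'
  refine antitoneOn_of_deriv_nonpos (convex_Iio 1)
    (fun y hy => (hderiv y hy).continuousAt.continuousWithinAt)
    (fun y hy => (hderiv y (interior_subset (s := Iio 1) hy)).differentiableAt
      |>.differentiableWithinAt) fun y hy => ?_
  rw [interior_Iio] at hy
  rw [(hderiv y hy).deriv, mul_comm (∑ l ∈ L, qTerm q l y ^ 2)]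
  refine div_nonpos_of_nonpos_of_nonneg (sub_nonpos.2 ?_) (sq_nonneg _)
  exact sum_mul_sum_sq_le_of_le S L _ (fun l _ => (qTerm_pos hq0 hq1 hy l).le)
    fun k hk l hl => qTerm_le_qTerm_of_le hq0.le hq1 hy (hSL k hk l hl)

theorem strictAntiOn_qProd_mul_one_add (hq0 : 0 < q) (hq1 : q ≤ 1) {S L : Finset ℕ}
    (hS : S.Nonempty) (hL : L.Nonempty) (hSL : ∀ k ∈ S, ∀ l ∈ L, k ≤ l) :
    StrictAntiOn
      (fun y => qProd q L y * (1 + (∑ l ∈ L, qTerm q l y) / ∑ k ∈ S, qTerm q k y)) (Iio 1) := by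
  intro x hx z hz hxz
  have hratio := antitoneOn_sum_qTerm_div_sum_qTerm hq0 hq1 hS hSL hx hz hxz.le
  have hpos : 0 < 1 + (∑ l ∈ L, qTerm q l z) / ∑ k ∈ S, qTerm q k z := by
    have : 0 ≤ ∑ l ∈ L, qTerm q l z := sum_nonneg fun l _ => (qTerm_pos hq0 hq1 hz l).le
    have : 0 ≤ ∑ k ∈ S, qTerm q k z := sum_nonneg fun k _ => (qTerm_pos hq0 hq1 hz k).le
    positivity
  calc qProd q L z * (1 + (∑ l ∈ L, qTerm q l z) / ∑ k ∈ S, qTerm q k z)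
      < qProd q L x * (1 + (∑ l ∈ L, qTerm q l z) / ∑ k ∈ S, qTerm q k z) := by
        gcongr
        exact qProd_strictAntiOn hq0 hq1 hL hx hz hxz
    _ ≤ qProd q L x * (1 + (∑ l ∈ L, qTerm q l x) / ∑ k ∈ S, qTerm q k x) := by
        have := qProd_pos hq0.le hq1 hx L
        gcongr

theorem qProd_Ico_chord_slope_lt (hq0 : 0 < q) (hq1 : q ≤ 1) {i j s : ℕ} (hij : i < j)
    (hjs : j < s) {a b c : ℝ} (hab : a < b) (hbc : b < c) (hc : c < 1) :
    (qProd q (Ico i j) a - qProd q (Ico i j) b) * (qProd q (Ico i s) b - qProd q (Ico i s) c) <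
      (qProd q (Ico i j) b - qProd q (Ico i j) c) *
        (qProd q (Ico i s) a - qProd q (Ico i s) b) := by
  have hS : (Finset.Ico i j).Nonempty := Finset.nonempty_Ico.2 hij
  have hSL : ∀ k ∈ Finset.Ico i j, ∀ l ∈ Finset.Ico j s, k ≤ l := fun k hk l hl =>
    ((Finset.mem_Ico.1 hk).2.trans_le (Finset.mem_Ico.1 hl).1).le
  have hlt : ∀ x ∈ Icc a c, x < 1 := fun x hx => hx.2.trans_lt hc
  have hne : ∀ x ∈ Icc a c, ∀ (A : Finset ℕ), ∀ k ∈ A, 1 - x * q ^ k ≠ 0 := fun x hx _ k _ =>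
    (one_sub_mul_pow_pos hq0.le hq1 (hlt x hx) k).ne'
  refine sub_mul_sub_lt_of_hasDerivAt hab hbc (fun x hx => ?_)
    (fun x hx => hasDerivAt_qProd (Ico i j) (hne x hx _))
    (fun x hx => neg_neg_of_pos (mul_pos (qProd_pos hq0.le hq1 (hlt x hx) _)
      (sum_pos (fun k _ => qTerm_pos hq0 hq1 (hlt x hx) k) hS)))
    ((strictAntiOn_qProd_mul_one_add hq0 hq1 hS (Finset.nonempty_Ico.2 hjs) hSL).mono hlt)
  refine (hasDerivAt_qProd (Ico i s) (hne x hx _)).congr_deriv ?_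
  have hu : ∑ k ∈ Ico i j, qTerm q k x ≠ 0 :=
    (sum_pos (fun k _ => qTerm_pos hq0 hq1 (hlt x hx) k) hS).ne'
  rw [← qProd_Ico_mul_qProd_Ico hij.le hjs.le, ← sum_Ico_consecutive _ hij.le hjs.le]
  field_simp

theorem qPoch_kernel_STP3_general (q : ℝ) (hq0 : 0 < q) (hq1 : q < 1)
    (μ₁ μ₂ μ₃ : ℝ) (hμ0 : 0 < μ₁) (hμ12 : μ₁ < μ₂) (hμ23 : μ₂ < μ₃)
    (i j s : ℕ) (hij : i < j) (hjs : j < s) :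
    0 < Matrix.det
        !![qPoch (q ^ μ₁) q i, qPoch (q ^ μ₂) q i, qPoch (q ^ μ₃) q i;
           qPoch (q ^ μ₁) q j, qPoch (q ^ μ₂) q j, qPoch (q ^ μ₃) q j;
           qPoch (q ^ μ₁) q s, qPoch (q ^ μ₂) q s, qPoch (q ^ μ₃) q s] := by
  have hy₁ : q ^ μ₁ < 1 := Real.rpow_lt_one hq0.le hq1 hμ0
  have hy₂₁ : q ^ μ₂ < q ^ μ₁ := Real.rpow_lt_rpow_of_exponent_gt hq0 hq1 hμ12
  have hy₃₂ : q ^ μ₃ < q ^ μ₂ := Real.rpow_lt_rpow_of_exponent_gt hq0 hq1 hμ23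
  simp only [qPoch_eq_mul_qProd _ hij.le, qPoch_eq_mul_qProd _ (hij.trans hjs).le,
    Matrix.det_fin_three_mul_col]
  have hp : ∀ y < 1, 0 < qPoch y q i := fun y hy => qPoch_pos hq0.le hq1.le hy i
  exact mul_pos (mul_pos (mul_pos (hp _ hy₁) (hp _ (hy₂₁.trans hy₁)))
      (hp _ (hy₃₂.trans (hy₂₁.trans hy₁))))
    (sub_pos.2 (qProd_Ico_chord_slope_lt hq0 hq1.le hij hjs hy₃₂ hy₂₁ hy₁))

theorem qPoch_kernel_STP3 (q : ℝ) (hq0 : 0 < q) (hq1 : q < 1)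
    (μ₁ μ₂ μ₃ : ℝ) (hμ0 : 0 < μ₁) (hμ12 : μ₁ < μ₂) (hμ23 : μ₂ < μ₃)
    (i j s : ℕ) (hi : 1 ≤ i) (hij : i < j) (hjs : j < s) :
    0 < Matrix.det
        !![qPoch (q ^ μ₁) q i, qPoch (q ^ μ₂) q i, qPoch (q ^ μ₃) q i;
           qPoch (q ^ μ₁) q j, qPoch (q ^ μ₂) q j, qPoch (q ^ μ₃) q j;
           qPoch (q ^ μ₁) q s, qPoch (q ^ μ₂) q s, qPoch (q ^ μ₃) q s] :=
  qPoch_kernel_STP3_general q hq0 hq1 μ₁ μ₂ μ₃ hμ0 hμ12 hμ23 i j s hij hjs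
end

section
/- The kernel K(x,y) = e^{xy} is strictly totally positive of every order on ℝ × ℝ: for any m ≥ 1 and any reals x₁ < ... < xₘ, y₁ < ... < yₘ, det(e^{xᵢyⱼ})_{i,j=1}^m > 0. -/
/-! A kernel vector `c` of the matrix `(e^{xᵢ yⱼ})` would give an exponential sum
`∑ⱼ cⱼ e^{yⱼ t}` vanishing at `x₁ < ⋯ < xₘ`; shifting the exponents so that one of them is `0`
and applying Rolle's theorem lowers the number of terms and of zeros by one, so by induction no
such `c ≠ 0` exists. Hence the determinant does not vanish on the convex, so connected, set of
strictly increasing `y`, and it is positive there because at `y = (0, 1, …, m - 1)` it is the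
Vandermonde determinant of the increasing nodes `e^{xᵢ}`. -/

open Real Finset Matrix

theorem IsPreconnected.pos_of_forall_ne_zero {X α : Type*} [TopologicalSpace X] [LinearOrder α]
    [TopologicalSpace α] [OrderClosedTopology α] [Zero α] {s : Set X} (hs : IsPreconnected s)
    {f : X → α} (hf : ContinuousOn f s) (hf₀ : ∀ x ∈ s, f x ≠ 0) {a b : X} (ha : a ∈ s)
    (hb : b ∈ s) (hfa : 0 < f a) : 0 < f b := by
  by_contra! hfb
  obtain ⟨x, hxs, hfx⟩ := hs.intermediate_value hb ha hf ⟨hfb, hfa.le⟩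
  exact hf₀ x hxs hfx

theorem convex_setOf_strictMono {ι 𝕜 : Type*} [Preorder ι] [Field 𝕜] [LinearOrder 𝕜]
    [IsStrictOrderedRing 𝕜] : Convex 𝕜 {v : ι → 𝕜 | StrictMono v} := by
  intro u hu v hv a b ha hb hab i j hij
  simp only [Pi.add_apply, Pi.smul_apply, smul_eq_mul]
  rcases ha.lt_or_eq with ha | rfl
  · exact add_lt_add_of_lt_of_le (mul_lt_mul_of_pos_left (hu hij) ha)
      (mul_le_mul_of_nonneg_left (hv hij).le hb)
  · rw [zero_add] at hab
    simpa [hab] using hv hij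

theorem det_vandermonde_pos {R : Type*} [CommRing R] [LinearOrder R] [IsStrictOrderedRing R]
    {n : ℕ} {v : Fin n → R} (hv : StrictMono v) : 0 < (vandermonde v).det := by
  rw [det_vandermonde]
  exact prod_pos fun i _ ↦ prod_pos fun j hj ↦ sub_pos.mpr (hv (mem_Ioi.mp hj))

theorem exists_strictMono_hasDerivAt_eq_zero {n : ℕ} {x : Fin (n + 1) → ℝ} (hx : StrictMono x)
    {g g' : ℝ → ℝ} (hg : ∀ t, HasDerivAt g (g' t) t) (hg₀ : ∀ i, g (x i) = 0) :
    ∃ z : Fin n → ℝ, StrictMono z ∧ ∀ i, g' (z i) = 0 := by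
  have hgc : Continuous g := continuous_iff_continuousAt.mpr fun t ↦ (hg t).continuousAt
  have rolle (i : Fin n) : ∃ z ∈ Set.Ioo (x i.castSucc) (x i.succ), g' z = 0 :=
    exists_hasDerivAt_eq_zero (hx Fin.castSucc_lt_succ) hgc.continuousOn
      (by rw [hg₀, hg₀]) fun t _ ↦ hg t
  choose z hz hz₀ using rolle
  refine ⟨z, fun i j hij ↦ ?_, hz₀⟩
  calc z i < x i.succ := (hz i).2
    _ ≤ x j.castSucc := hx.monotone (Fin.succ_le_castSucc_iff.mpr hij)
    _ < z j := (hz j).1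

noncomputable def expSum {n : ℕ} (y c : Fin n → ℝ) (t : ℝ) : ℝ := ∑ j, c j * exp (y j * t)

theorem hasDerivAt_expSum {n : ℕ} (y c : Fin n → ℝ) (t : ℝ) :
    HasDerivAt (expSum y c) (expSum y (c * y) t) t := by
  unfold expSum
  exact HasDerivAt.fun_sum fun j _ ↦
    (((hasDerivAt_id t).const_mul (y j)).exp.const_mul (c j)).congr_deriv
      (by simp only [Pi.mul_apply, id_eq]; ring)

theorem expSum_sub_const {n : ℕ} (y c : Fin n → ℝ) (a t : ℝ) :
    expSum (fun j ↦ y j - a) c t = exp (-(a * t)) * expSum y c t := by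
  simp only [expSum, mul_sum]
  refine sum_congr rfl fun j _ ↦ ?_
  rw [mul_left_comm, ← exp_add]
  ring_nf

theorem expSum_succ {n : ℕ} (y c : Fin (n + 1) → ℝ) (t : ℝ) :
    expSum y c t = c 0 * exp (y 0 * t) + expSum (fun j ↦ y j.succ) (fun j ↦ c j.succ) t :=
  Fin.sum_univ_succ _

theorem eq_zero_of_expSum_eq_zero {n : ℕ} {y x : Fin n → ℝ} (hy : Function.Injective y)
    (hx : StrictMono x) {c : Fin n → ℝ} (hc : ∀ i, expSum y c (x i) = 0) : c = 0 := by
  induction n with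
  | zero => exact Subsingleton.elim _ _
  | succ n ih =>
    set y' : Fin (n + 1) → ℝ := fun j ↦ y j - y 0
    have hy' : ∀ j : Fin n, y' j.succ ≠ 0 := fun j ↦ sub_ne_zero.mpr (hy.ne (Fin.succ_ne_zero j))
    obtain ⟨z, hz, hz₀⟩ := exists_strictMono_hasDerivAt_eq_zero hx (hasDerivAt_expSum y' c)
      fun i ↦ by rw [expSum_sub_const, hc, mul_zero]
    have hcy : (fun j : Fin n ↦ c j.succ * y' j.succ) = 0 := by
      refine ih (y := fun j ↦ y' j.succ) (fun i j hij ↦ ?_) hz fun i ↦ ?_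
      · exact Fin.succ_injective _ (hy (sub_left_inj.mp hij))
      · simpa [expSum_succ, y'] using hz₀ i
    have hsucc (j : Fin n) : c j.succ = 0 := by
      simpa [hy' j] using congrFun hcy j
    have h0 : c 0 = 0 := by
      simpa [hsucc, expSum, exp_ne_zero] using (expSum_succ y c (x 0)).symm.trans (hc 0)
    ext j
    cases j using Fin.cases with
    | zero => exact h0
    | succ j => exact hsucc j

theorem det_exp_mul_ne_zero {n : ℕ} {x y : Fin n → ℝ} (hx : StrictMono x)
    (hy : Function.Injective y) : (of fun i j ↦ exp (x i * y j)).det ≠ 0 := by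
  intro hdet
  obtain ⟨c, hc, hmul⟩ := exists_mulVec_eq_zero_iff.mpr hdet
  refine hc (eq_zero_of_expSum_eq_zero hy hx fun i ↦ ?_)
  have hrow := congrFun hmul i
  simp only [mulVec, dotProduct, of_apply, Pi.zero_apply] at hrow
  rw [expSum, ← hrow]
  exact sum_congr rfl fun j _ ↦ by rw [mul_comm (x i), mul_comm]

theorem exp_kernel_STP_general (m : ℕ) (x y : Fin m → ℝ)
    (hx : StrictMono x) (hy : StrictMono y) :
    0 < Matrix.det (Matrix.of fun i j : Fin m => Real.exp (x i * y j)) := by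
  set D : (Fin m → ℝ) → ℝ := fun v ↦ (of fun i j ↦ exp (x i * v j)).det
  have hD : Continuous D := by fun_prop
  have hvandermonde : D (fun j ↦ j) = (vandermonde (exp ∘ x)).det := by
    change (of _).det = _
    congr 1
    ext i j
    simp [← exp_nat_mul, mul_comm]
  refine convex_setOf_strictMono.isPreconnected.pos_of_forall_ne_zero hD.continuousOn
    (fun v hv ↦ det_exp_mul_ne_zero hx hv.injective) (a := fun j ↦ j)
    (fun i j hij ↦ by simpa using hij) hy ?_
  rw [hvandermonde]
  exact det_vandermonde_pos (exp_strictMono.comp hx)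

theorem exp_kernel_STP (m : ℕ) (hm : 1 ≤ m) (x y : Fin m → ℝ)
    (hx : StrictMono x) (hy : StrictMono y) :
    0 < Matrix.det (Matrix.of fun i j : Fin m => Real.exp (x i * y j)) :=
  exp_kernel_STP_general m x y hx hy
end

section
/- Suppose bₖ > 0 for all k ≥ 0, and there is m ≥ 1 such that a₀/b₀ ≤ a₁/b₁ ≤ ... ≤ aₘ/bₘ and aₘ/bₘ ≥ a_{m+1}/b_{m+1} ≥ ..., with at least one strict inequality in each chain. Define F(x) = (∑_{k≥0} aₖ(x)ₖ)/(∑_{k≥0} bₖ(x)ₖ), assuming both series converge uniformly on compact subsets of ℝ (in particular converge absolutely for all x > 0). Then F(x+1) − F(x) < 0 for all sufficiently large x > 0. -/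
/-!
Write `r k = aₖ / bₖ`. For partial sums,
`x (A(x+1) B(x) - A(x) B(x+1)) = ∑_{k < n} (n - k)(aₙ bₖ - aₖ bₙ) (x)ₖ (x)ₙ`; group it by rows `n`.
Pick `k₀ ≥ m` with `δ := r k₀ - r (k₀+1) > 0`. In a row `n > k₀` the entries `k₀ < k < n` are
`≤ 0`, the entry `k = k₀` is at most `-δ (n - k₀) b_{k₀} bₙ (x)_{k₀}`, and the entries `k < k₀`,
of lower degree in `x`, are dominated by it for large `x` uniformly in `n`. So all rows beyond `k₀`
are negative, and row `k₀ + 1` contributes a term of degree `2k₀ + 1` in `x` which beats the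
finitely many rows `n ≤ k₀`, of degree at most `2k₀`.
-/

/-- The Pochhammer symbol `(x)_n = x (x+1) ⋯ (x+n-1)`, with `(x)_0 = 1`. -/
def poch (x : ℝ) (n : ℕ) : ℝ := ∏ k ∈ Finset.range n, (x + k)

open Finset Filter

lemma poch_succ (x : ℝ) (n : ℕ) : poch x (n + 1) = poch x n * (x + n) :=
  prod_range_succ _ _

lemma poch_pos {x : ℝ} (hx : 0 < x) (n : ℕ) : 0 < poch x n :=
  prod_pos fun _ _ => by positivity

lemma poch_monotone {x : ℝ} (hx : 1 ≤ x) : Monotone (poch x) :=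
  monotone_nat_of_le_succ fun n => by
    rw [poch_succ]
    exact le_mul_of_one_le_right (poch_pos (by linarith) n).le
      (by linarith [n.cast_nonneg (α := ℝ)])

lemma mul_poch_le_poch {x : ℝ} (hx : 1 ≤ x) {k j : ℕ} (h : k < j) : x * poch x k ≤ poch x j :=
  calc x * poch x k ≤ poch x k * (x + k) := by
        rw [mul_comm]
        exact mul_le_mul_of_nonneg_left (by linarith [k.cast_nonneg (α := ℝ)])
          (poch_pos (by linarith) k).le
    _ = poch x (k + 1) := (poch_succ x k).symm
    _ ≤ poch x j := poch_monotone hx h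

lemma mul_poch_add_one (x : ℝ) (n : ℕ) : x * poch (x + 1) n = (x + n) * poch x n := by
  rw [mul_comm (x + n), ← poch_succ, poch, poch, prod_range_succ']
  simp only [Nat.cast_add, Nat.cast_one, Nat.cast_zero, add_zero, ← add_assoc,
    add_right_comm x _ (1 : ℝ), mul_comm x]

lemma sum_range_sum_range_of_diag_eq_zero {M : Type*} [AddCommMonoid M] (g : ℕ → ℕ → M)
    (hg : ∀ n, g n n = 0) (N : ℕ) :
    ∑ k ∈ range N, ∑ n ∈ range N, g k n = ∑ n ∈ range N, ∑ k ∈ range n, (g k n + g n k) := by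
  induction N with
  | zero => simp
  | succ N ih =>
    simp only [sum_range_succ, hg, add_zero, sum_add_distrib, ih]
    abel

def pochEntry (a b : ℕ → ℝ) (x : ℝ) (n k : ℕ) : ℝ :=
  ((n : ℝ) - k) * (a n * b k - a k * b n) * poch x k

def pochRow (a b : ℕ → ℝ) (x : ℝ) (n : ℕ) : ℝ :=
  ∑ k ∈ range n, pochEntry a b x n k

lemma mul_cross_partialSums_eq (a b : ℕ → ℝ) (x : ℝ) (N : ℕ) :
    x * ((∑ k ∈ range N, a k * poch (x + 1) k) * (∑ k ∈ range N, b k * poch x k)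
      - (∑ k ∈ range N, a k * poch x k) * (∑ k ∈ range N, b k * poch (x + 1) k))
      = ∑ n ∈ range N, poch x n * pochRow a b x n := by
  have shift : ∀ c : ℕ → ℝ, x * ∑ k ∈ range N, c k * poch (x + 1) k
      = ∑ k ∈ range N, c k * ((x + k) * poch x k) := fun c => by
    rw [mul_sum]; exact sum_congr rfl fun k _ => by rw [← mul_poch_add_one]; ring
  have htriangle := sum_range_sum_range_of_diag_eq_zero
    (fun k n => ((k : ℝ) - n) * (a k * b n) * (poch x k * poch x n)) (by simp) N
  calc _ = (x * ∑ k ∈ range N, a k * poch (x + 1) k) * (∑ k ∈ range N, b k * poch x k)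
        - (∑ k ∈ range N, a k * poch x k) * (x * ∑ k ∈ range N, b k * poch (x + 1) k) := by ring
    _ = ∑ k ∈ range N, ∑ n ∈ range N, ((k : ℝ) - n) * (a k * b n) * (poch x k * poch x n) := by
      rw [shift, shift, sum_mul_sum, sum_mul_sum, ← sum_sub_distrib]
      exact sum_congr rfl fun k _ => by
        rw [← sum_sub_distrib]; exact sum_congr rfl fun n _ => by ring
    _ = _ := by
      rw [htriangle]
      exact sum_congr rfl fun n _ => by
        rw [pochRow, mul_sum]; exact sum_congr rfl fun k _ => by rw [pochEntry]; ring

lemma mul_sub_mul_eq_mul_mul_div_sub_div {K : Type*} [Field K] {p q u v : K} (hu : u ≠ 0)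
    (hv : v ≠ 0) : p * v - q * u = v * u * (p / u - q / v) := by
  field_simp

lemma pochEntry_le_of_div_add_le {a b : ℕ → ℝ} (hb : ∀ k, 0 < b k) {x δ : ℝ} (hx : 0 < x)
    {k n : ℕ} (hkn : k ≤ n) (hr : a n / b n + δ ≤ a k / b k) :
    pochEntry a b x n k ≤ -(δ * ((n : ℝ) - k) * b k * b n * poch x k) := by
  have : 0 ≤ ((n : ℝ) - k) * b k * b n * poch x k :=
    mul_nonneg (mul_nonneg (mul_nonneg (sub_nonneg.2 (by exact_mod_cast hkn)) (hb k).le)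
      (hb n).le) (poch_pos hx k).le
  rw [pochEntry, mul_sub_mul_eq_mul_mul_div_sub_div (hb n).ne' (hb k).ne']
  nlinarith

lemma mul_pochEntry_le {a b : ℕ → ℝ} (hb : ∀ k, 0 < b k) {x : ℝ} (hx : 1 ≤ x) {k k₀ n : ℕ}
    (hk : k < k₀) (hn : k₀ < n) (hr : a n / b n ≤ a k₀ / b k₀) :
    x * pochEntry a b x n k
      ≤ (k₀ + 1) * (((n : ℝ) - k₀) * b n * poch x k₀) * (b k * |a k₀ / b k₀ - a k / b k|) := by
  have hxk := mul_poch_le_poch hx hk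
  have hkR : (k : ℝ) + 1 ≤ k₀ := by exact_mod_cast hk
  have hnR : (k₀ : ℝ) + 1 ≤ n := by exact_mod_cast hn
  have hrk : a n / b n - a k / b k ≤ |a k₀ / b k₀ - a k / b k| :=
    (sub_le_sub_right hr _).trans (le_abs_self _)
  have := hb k
  have := hb n
  have := poch_pos (zero_lt_one.trans_le hx) k
  have := poch_pos (zero_lt_one.trans_le hx) k₀
  rw [pochEntry, mul_sub_mul_eq_mul_mul_div_sub_div (hb n).ne' (hb k).ne']
  calc x * (((n : ℝ) - k) * (b k * b n * (a n / b n - a k / b k)) * poch x k)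
      = ((n : ℝ) - k) * (a n / b n - a k / b k) * (b k * b n) * (x * poch x k) := by ring
    _ ≤ ((n : ℝ) - k) * |a k₀ / b k₀ - a k / b k| * (b k * b n) * poch x k₀ := by
      have : (0 : ℝ) ≤ n - k := by linarith
      gcongr
    _ ≤ ((k₀ + 1) * ((n : ℝ) - k₀)) * |a k₀ / b k₀ - a k / b k| * (b k * b n) * poch x k₀ := by
      gcongr
      nlinarith [k.cast_nonneg (α := ℝ)]
    _ = _ := by ring

lemma exists_eventually_pochRow_le {a b : ℕ → ℝ} (hb : ∀ k, 0 < b k) {k₀ : ℕ}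
    (hanti : AntitoneOn (fun k => a k / b k) (Set.Ici k₀))
    (hdrop : a (k₀ + 1) / b (k₀ + 1) < a k₀ / b k₀) :
    ∃ c > 0, ∀ᶠ x in atTop, ∀ n, k₀ < n →
      pochRow a b x n ≤ -(c * ((n : ℝ) - k₀) * b n * poch x k₀) := by
  set δ := a k₀ / b k₀ - a (k₀ + 1) / b (k₀ + 1)
  set L := ∑ k ∈ range k₀, b k * |a k₀ / b k₀ - a k / b k|
  have hc : 0 < δ * b k₀ / 2 := div_pos (mul_pos (sub_pos.2 hdrop) (hb k₀)) two_pos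
  refine ⟨δ * b k₀ / 2, hc, ?_⟩
  filter_upwards [eventually_ge_atTop 1, eventually_ge_atTop ((k₀ + 1) * L / (δ * b k₀ / 2))]
    with x hx hxL n hn
  rw [div_le_iff₀ hc] at hxL
  have hx0 : 0 < x := by linarith
  have hr : ∀ k, k₀ ≤ k → k ≤ n → a n / b n ≤ a k / b k := fun k hk hkn =>
    hanti (Set.mem_Ici.2 hk) (Set.mem_Ici.2 (hk.trans hkn)) hkn
  set P := ((n : ℝ) - k₀) * b n * poch x k₀
  have hP : 0 ≤ P :=
    mul_nonneg (mul_nonneg (sub_nonneg.2 (by exact_mod_cast hn.le)) (hb n).le)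
      (poch_pos hx0 k₀).le
  have hlow : x * ∑ k ∈ range k₀, pochEntry a b x n k ≤ x * (δ * b k₀ / 2 * P) := by
    calc _ ≤ ∑ k ∈ range k₀, (k₀ + 1) * P * (b k * |a k₀ / b k₀ - a k / b k|) := by
          rw [mul_sum]
          exact sum_le_sum fun k hk =>
            mul_pochEntry_le hb hx (mem_range.1 hk) hn (hr k₀ le_rfl hn.le)
      _ = (k₀ + 1) * L * P := by rw [← mul_sum]; ring
      _ ≤ x * (δ * b k₀ / 2 * P) := by nlinarith
  have hmid : pochEntry a b x n k₀ ≤ -(δ * b k₀ * P) := by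
    have := pochEntry_le_of_div_add_le hb hx0 hn.le
      (show a n / b n + δ ≤ a k₀ / b k₀ by linarith [hr (k₀ + 1) k₀.le_succ hn])
    linarith [show δ * ((n : ℝ) - k₀) * b k₀ * b n * poch x k₀ = δ * b k₀ * P by ring]
  have hhigh : ∑ k ∈ Ico (k₀ + 1) n, pochEntry a b x n k ≤ 0 :=
    sum_nonpos fun k hk => by
      obtain ⟨hk, hkn⟩ := mem_Ico.1 hk
      have := pochEntry_le_of_div_add_le (δ := 0) hb hx0 hkn.le
        (by rw [add_zero]; exact hr k (by omega) hkn.le)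
      linarith
  have := le_of_mul_le_mul_left hlow hx0
  rw [pochRow, ← sum_range_add_sum_Ico _ hn, sum_range_succ]
  linarith

lemma eventually_sum_range_mul_pochRow_lt (a b : ℕ → ℝ) (k₀ : ℕ) {c : ℝ} (hc : 0 < c) :
    ∀ᶠ x in atTop, ∑ n ∈ range (k₀ + 1), poch x n * pochRow a b x n
      < c * (poch x k₀ * poch x (k₀ + 1)) := by
  set M := ∑ n ∈ range (k₀ + 1), ∑ k ∈ range n, |((n : ℝ) - k) * (a n * b k - a k * b n)|
  filter_upwards [eventually_ge_atTop 1, eventually_gt_atTop (M / c)] with x hx hxM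
  have hMx : M < c * x := by rw [div_lt_iff₀ hc] at hxM; linarith
  have hx0 : 0 < x := by linarith
  set P := poch x k₀ * poch x (k₀ + 1)
  have hP : 0 < P := mul_pos (poch_pos hx0 _) (poch_pos hx0 _)
  have hbound : x * ∑ n ∈ range (k₀ + 1), poch x n * pochRow a b x n ≤ M * P := by
    rw [mul_sum, sum_mul]
    refine sum_le_sum fun n hn => ?_
    rw [pochRow, mul_sum, mul_sum, sum_mul]
    refine sum_le_sum fun k hk => ?_
    rw [pochEntry]
    have hn := mem_range.1 hn
    have hk := mem_range.1 hk
    have := poch_pos hx0 n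
    have := poch_pos hx0 k
    calc _ = ((n : ℝ) - k) * (a n * b k - a k * b n) * (poch x n * (x * poch x k)) := by ring
      _ ≤ |((n : ℝ) - k) * (a n * b k - a k * b n)| * (poch x n * (x * poch x k)) := by
        gcongr; exact le_abs_self _
      _ ≤ |((n : ℝ) - k) * (a n * b k - a k * b n)| * P :=
        mul_le_mul_of_nonneg_left (mul_le_mul (poch_monotone hx (by omega : n ≤ k₀))
          (mul_poch_le_poch hx (by omega : k < k₀ + 1)) (by positivity) (poch_pos hx0 k₀).le)
          (abs_nonneg _)
  exact lt_of_mul_lt_mul_left (hbound.trans_lt (by nlinarith)) hx0.le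

lemma sum_range_mul_pochRow_le {a b : ℕ → ℝ} (hb : ∀ k, 0 < b k) {x c : ℝ} (hx : 0 < x)
    (hc : 0 ≤ c) {k₀ : ℕ}
    (hrow : ∀ n, k₀ < n → pochRow a b x n ≤ -(c * ((n : ℝ) - k₀) * b n * poch x k₀))
    {N : ℕ} (hN : k₀ + 2 ≤ N) :
    ∑ n ∈ range N, poch x n * pochRow a b x n
      ≤ ∑ n ∈ range (k₀ + 1), poch x n * pochRow a b x n
        - c * b (k₀ + 1) * (poch x k₀ * poch x (k₀ + 1)) := by
  have htail : ∑ n ∈ Ico (k₀ + 2) N, poch x n * pochRow a b x n ≤ 0 :=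
    sum_nonpos fun n hn => by
      have hn := (mem_Ico.1 hn).1
      have hnk₀ : (k₀ : ℝ) ≤ n := by exact_mod_cast (by omega : k₀ ≤ n)
      refine mul_nonpos_of_nonneg_of_nonpos (poch_pos hx n).le ((hrow n (by omega)).trans ?_)
      have := mul_nonneg (mul_nonneg (mul_nonneg hc (sub_nonneg.2 hnk₀)) (hb n).le)
        (poch_pos hx k₀).le
      linarith
  have hlast := mul_le_mul_of_nonneg_left (hrow (k₀ + 1) k₀.lt_succ_self)
    (poch_pos hx (k₀ + 1)).le
  rw [← sum_range_add_sum_Ico _ hN, sum_range_succ]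
  push_cast at hlast
  linarith [show poch x (k₀ + 1) * -(c * ((k₀ : ℝ) + 1 - k₀) * b (k₀ + 1) * poch x k₀)
    = -(c * b (k₀ + 1) * (poch x k₀ * poch x (k₀ + 1))) by ring]

lemma mul_cross_le_of_tendsto {a b : ℕ → ℝ} {A B : ℝ → ℝ}
    (hA : ∀ y, Tendsto (fun N => ∑ k ∈ range N, a k * poch y k) atTop (nhds (A y)))
    (hB : ∀ y, Tendsto (fun N => ∑ k ∈ range N, b k * poch y k) atTop (nhds (B y)))
    {x U : ℝ} (h : ∀ᶠ N in atTop, ∑ n ∈ range N, poch x n * pochRow a b x n ≤ U) :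
    x * (A (x + 1) * B x - A x * B (x + 1)) ≤ U :=
  le_of_tendsto ((((hA (x + 1)).mul (hB x)).sub ((hA x).mul (hB (x + 1)))).const_mul x)
    (h.mono fun N hN => (mul_cross_partialSums_eq a b x N).trans_le hN)

lemma pos_of_tendsto_partialSums {b : ℕ → ℝ} (hb : ∀ k, 0 < b k) {y β : ℝ} (hy : 0 < y)
    (hB : Tendsto (fun N => ∑ k ∈ range N, b k * poch y k) atTop (nhds β)) : 0 < β := by
  refine (hb 0).trans_le (ge_of_tendsto hB ?_)
  filter_upwards [eventually_ge_atTop 1] with N hN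
  simpa [poch] using
    single_le_sum (fun k _ => (mul_pos (hb k) (poch_pos hy k)).le) (mem_range.2 hN)

theorem factorial_series_ratio_eventually_decreasing_general
    (a b : ℕ → ℝ) (hb : ∀ k, 0 < b k) (m : ℕ)
    (hdown : ∀ k, m ≤ k → a (k + 1) / b (k + 1) ≤ a k / b k)
    (hdown_strict : ∃ k, m ≤ k ∧ a (k + 1) / b (k + 1) < a k / b k)
    (A B : ℝ → ℝ)
    (hA : ∀ K : Set ℝ, IsCompact K →
      TendstoUniformlyOn (fun N x => ∑ k ∈ Finset.range N, a k * poch x k) A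
        Filter.atTop K)
    (hB : ∀ K : Set ℝ, IsCompact K →
      TendstoUniformlyOn (fun N x => ∑ k ∈ Finset.range N, b k * poch x k) B
        Filter.atTop K) :
    ∃ X : ℝ, 0 < X ∧ ∀ x : ℝ, X ≤ x → A (x + 1) / B (x + 1) - A x / B x < 0 := by
  obtain ⟨k₀, hmk₀, hdrop⟩ := hdown_strict
  have hanti : AntitoneOn (fun k => a k / b k) (Set.Ici k₀) :=
    antitoneOn_nat_Ici_of_succ_le fun k hk => hdown k (hmk₀.trans hk)
  have hA' := fun y => (hA {y} isCompact_singleton).tendsto_at (Set.mem_singleton y)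
  have hB' := fun y => (hB {y} isCompact_singleton).tendsto_at (Set.mem_singleton y)
  obtain ⟨c, hc, hrow⟩ := exists_eventually_pochRow_le hb hanti hdrop
  have hneg : ∀ᶠ x in atTop, A (x + 1) / B (x + 1) - A x / B x < 0 := by
    filter_upwards [eventually_gt_atTop 0, hrow,
      eventually_sum_range_mul_pochRow_lt a b k₀ (mul_pos hc (hb (k₀ + 1)))]
      with x hx hrow hblock
    have hcross : x * (A (x + 1) * B x - A x * B (x + 1)) < 0 :=
      (mul_cross_le_of_tendsto hA' hB' ((eventually_ge_atTop (k₀ + 2)).mono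
        fun N hN => sum_range_mul_pochRow_le hb hx hc.le hrow hN)).trans_lt (by linarith)
    have hBx := pos_of_tendsto_partialSums hb hx (hB' x)
    have hBx1 := pos_of_tendsto_partialSums hb (by linarith) (hB' (x + 1))
    rw [div_sub_div _ _ hBx1.ne' hBx.ne']
    exact div_neg_of_neg_of_pos (by nlinarith) (mul_pos hBx1 hBx)
  obtain ⟨X, hX⟩ := eventually_atTop.1 hneg
  exact ⟨max X 1, by positivity, fun x hx => hX x (le_of_max_le_left hx)⟩

theorem factorial_series_ratio_eventually_decreasing
    (a b : ℕ → ℝ) (hb : ∀ k, 0 < b k) (m : ℕ) (hm : 1 ≤ m)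
    (hup : ∀ k, k < m → a k / b k ≤ a (k + 1) / b (k + 1))
    (hdown : ∀ k, m ≤ k → a (k + 1) / b (k + 1) ≤ a k / b k)
    (hup_strict : ∃ k, k < m ∧ a k / b k < a (k + 1) / b (k + 1))
    (hdown_strict : ∃ k, m ≤ k ∧ a (k + 1) / b (k + 1) < a k / b k)
    (A B : ℝ → ℝ)
    (hA : ∀ K : Set ℝ, IsCompact K →
      TendstoUniformlyOn (fun N x => ∑ k ∈ Finset.range N, a k * poch x k) A
        Filter.atTop K)
    (hB : ∀ K : Set ℝ, IsCompact K →
      TendstoUniformlyOn (fun N x => ∑ k ∈ Finset.range N, b k * poch x k) B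
        Filter.atTop K) :
    ∃ X : ℝ, 0 < X ∧ ∀ x : ℝ, X ≤ x → A (x + 1) / B (x + 1) - A x / B x < 0 :=
  factorial_series_ratio_eventually_decreasing_general a b hb m hdown hdown_strict A B hA hB
end
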